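/- Let ρ: 𝓧 → [−∞, ∞] with 𝓛 ⊆ 𝓧 ⊆ L¹ and define ρ^#(Y) = sup_{X ∈ 𝓛} { E[XY] − ρ(X) } for Y ∈ L¹. If ρ is dilatation monotone, then ρ^# is dilatation monotone on L¹, i.e. ρ^#(E[Y|π]) ≤ ρ^#(Y) for every Y ∈ L¹ and finite partition π ∈ Π. -/

import Mathlib

open MeasureTheory Filter Topology

variable {Ω : Type*} [MeasurableSpace Ω]

/-- A finite measurable partition of `Ω` whose members have positive measure. -/
structure FinPartition (μ : Measure Ω) where
  parts : Finset (Set Ω)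
  measSet : ∀ A ∈ parts, MeasurableSet A
  pairwiseDisj : ∀ A ∈ parts, ∀ B ∈ parts, A ≠ B → Disjoint A B
  cover : ⋃ A ∈ parts, A = Set.univ
  pos : ∀ A ∈ parts, 0 < μ A

/-- Conditional expectation of `X` with respect to the finite partition `π`:
`E[X|π] = ∑_{A ∈ π} (∫_A X dμ / μ(A)) 1_A`. -/
noncomputable def pCondExp (μ : Measure Ω) (π : FinPartition μ) (X : Ω → ℝ) : Ω → ℝ :=
  fun ω => ∑ A ∈ π.parts, Set.indicator A (fun _ => (∫ x in A, X x ∂μ) / (μ A).toReal) ω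

/-- A simple random variable. -/
def IsSimpleRV (X : Ω → ℝ) : Prop := Measurable X ∧ (Set.range X).Finite

/-- Membership in the smallest ideal of `L¹` generated by `S`. -/
def MemIdeal (μ : Measure Ω) (S : Set (Ω → ℝ)) (X : Ω → ℝ) : Prop :=
  ∃ (n : ℕ) (Y : Fin n → Ω → ℝ) (l : Fin n → ℝ),
    (∀ i, Y i ∈ S) ∧ (∀ i, 0 ≤ l i) ∧ ∀ᵐ ω ∂μ, |X ω| ≤ ∑ i, l i * |Y i ω|

/-- Dilatation monotonicity of `ρ` on `𝓧`. -/
def DilMono (μ : Measure Ω) (𝓧 : Set (Ω → ℝ)) (ρ : (Ω → ℝ) → EReal) : Prop :=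
  ∀ X ∈ 𝓧, ∀ π : FinPartition μ, ρ (pCondExp μ π X) ≤ ρ X

/-- The Fatou property of `ρ` on `𝓧`. -/
def FatouProp (μ : Measure Ω) (𝓧 : Set (Ω → ℝ)) (ρ : (Ω → ℝ) → EReal) : Prop :=
  ∀ (Xn : ℕ → Ω → ℝ) (X : Ω → ℝ), (∀ n, Xn n ∈ 𝓧) → X ∈ 𝓧 →
    (∀ᵐ ω ∂μ, Tendsto (fun n => Xn n ω) atTop (nhds (X ω))) →
    (∃ Y, MemIdeal μ 𝓧 Y ∧ ∀ᵐ ω ∂μ, ∀ n, |Xn n ω| ≤ Y ω) →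
    ρ X ≤ liminf (fun n => ρ (Xn n)) atTop

/-- Convergence of a net in the `σ(L¹, 𝓛)` topology. -/
def TendstoWeakSimple (μ : Measure Ω) {ι : Type*} (l : Filter ι)
    (Xn : ι → Ω → ℝ) (X : Ω → ℝ) : Prop :=
  ∀ Z : Ω → ℝ, IsSimpleRV Z →
    Tendsto (fun i => ∫ ω, Xn i ω * Z ω ∂μ) l (nhds (∫ ω, X ω * Z ω ∂μ))

/-- The extension `ρ̄(X) = sup_{π ∈ Π} ρ(E[X|π])`. -/
noncomputable def rhoBar (μ : Measure Ω) (ρ : (Ω → ℝ) → EReal) (X : Ω → ℝ) : EReal :=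
  ⨆ π : FinPartition μ, ρ (pCondExp μ π X)

/-- The conjugate `ρ^#(Y) = sup_{X ∈ 𝓛} { E[XY] - ρ(X) }`. -/
noncomputable def sharp (μ : Measure Ω) (ρ : (Ω → ℝ) → EReal) (Y : Ω → ℝ) : EReal :=
  ⨆ X : {X : Ω → ℝ // IsSimpleRV X}, (((∫ ω, X.1 ω * Y ω ∂μ : ℝ) : EReal) - ρ X.1)

/-! Each term `E[X E[Y|π]] - ρ(X)` of the supremum defining `ρ^#(E[Y|π])` is bounded by the term
`E[E[X|π] Y] - ρ(E[X|π])` of the supremum defining `ρ^#(Y)`: the integrals agree because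
`E[·|π]` is self-adjoint, and `E[X|π]` is again simple with `ρ(E[X|π]) ≤ ρ(X)`. -/

open scoped Pointwise in
theorem Set.Finite.range_finsetSum {ι α M : Type*} [AddCommMonoid M] (s : Finset ι)
    {F : ι → α → M} (hF : ∀ i ∈ s, (Set.range (F i)).Finite) :
    (Set.range fun a => ∑ i ∈ s, F i a).Finite := by
  classical
  refine (Finset.sum_induction (fun i => Set.range (F i)) Set.Finite
    (fun _ _ => Set.Finite.add) Set.finite_zero hF).subset ?_
  rintro _ ⟨a, rfl⟩
  exact Set.finsetSum_mem_finsetSum s _ _ fun i _ => Set.mem_range_self a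

theorem IsSimpleRV.integrable {μ : Measure Ω} [IsFiniteMeasure μ] {X : Ω → ℝ}
    (hX : IsSimpleRV X) : Integrable X μ := by
  obtain ⟨C, hC⟩ := (hX.2.image (fun x => |x|)).bddAbove
  exact (integrable_const C).mono' hX.1.aestronglyMeasurable
    (ae_of_all _ fun ω => hC ⟨X ω, ⟨ω, rfl⟩, rfl⟩)

theorem isSimpleRV_pCondExp (μ : Measure Ω) (π : FinPartition μ) (X : Ω → ℝ) :
    IsSimpleRV (pCondExp μ π X) := by
  refine ⟨Finset.measurable_sum _ fun A hA => measurable_const.indicator (π.measSet A hA),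
    Set.Finite.range_finsetSum _ fun A _ => ?_⟩
  refine (Set.toFinite {0, (∫ x in A, X x ∂μ) / (μ A).toReal}).subset
    (Set.range_subset_iff.2 fun ω => ?_)
  by_cases hω : ω ∈ A <;> simp [hω]

theorem integral_mul_pCondExp {μ : Measure Ω} (π : FinPartition μ) {X : Ω → ℝ}
    (hX : Integrable X μ) (Y : Ω → ℝ) :
    ∫ ω, X ω * pCondExp μ π Y ω ∂μ
      = ∑ A ∈ π.parts, (∫ x in A, X x ∂μ) * ((∫ x in A, Y x ∂μ) / (μ A).toReal) := by
  simp_rw [pCondExp, Finset.mul_sum, ← Set.indicator_mul_right]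
  rw [integral_finsetSum _ fun A hA => (hX.mul_const _).indicator (π.measSet A hA)]
  refine Finset.sum_congr rfl fun A hA => ?_
  rw [integral_indicator (π.measSet A hA), integral_mul_const]

theorem integral_mul_pCondExp_comm {μ : Measure Ω} (π : FinPartition μ) {X Y : Ω → ℝ}
    (hX : Integrable X μ) (hY : Integrable Y μ) :
    ∫ ω, X ω * pCondExp μ π Y ω ∂μ = ∫ ω, pCondExp μ π X ω * Y ω ∂μ := by
  simp_rw [mul_comm (pCondExp μ π X _)]
  rw [integral_mul_pCondExp π hX, integral_mul_pCondExp π hY]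
  exact Finset.sum_congr rfl fun A _ => mul_div_left_comm _ _ _

theorem stmt9_general (μ : Measure Ω) [IsProbabilityMeasure μ]
    (𝓧 : Set (Ω → ℝ))
    (h𝓛 : ∀ Z : Ω → ℝ, IsSimpleRV Z → Z ∈ 𝓧)
    (ρ : (Ω → ℝ) → EReal) (hdil : DilMono μ 𝓧 ρ) :
    ∀ (Y : Ω → ℝ), Integrable Y μ → ∀ π : FinPartition μ,
      sharp μ ρ (pCondExp μ π Y) ≤ sharp μ ρ Y := by
  intro Y hY π
  refine iSup_le fun ⟨X, hX⟩ => ?_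
  have hρ : ρ (pCondExp μ π X) ≤ ρ X := hdil X (h𝓛 X hX) π
  rw [integral_mul_pCondExp_comm π hX.integrable hY]
  exact (EReal.sub_le_sub le_rfl hρ).trans
    (le_iSup (fun Z : {X // IsSimpleRV X} => ((∫ ω, Z.1 ω * Y ω ∂μ : ℝ) : EReal) - ρ Z.1)
      ⟨_, isSimpleRV_pCondExp μ π X⟩)

/-- If `ρ` on `𝓧 ⊇ 𝓛` is dilatation monotone, then the conjugate
`ρ^#(Y) = sup_{X ∈ 𝓛}{E[XY] - ρ(X)}` is dilatation monotone on `L¹`. -/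
theorem stmt9 (μ : Measure Ω) [IsProbabilityMeasure μ]
    (𝓧 : Set (Ω → ℝ)) (h𝓧L1 : ∀ X ∈ 𝓧, Integrable X μ)
    (h𝓛 : ∀ Z : Ω → ℝ, IsSimpleRV Z → Z ∈ 𝓧)
    (ρ : (Ω → ℝ) → EReal) (hdil : DilMono μ 𝓧 ρ) :
    ∀ (Y : Ω → ℝ), Integrable Y μ → ∀ π : FinPartition μ,
      sharp μ ρ (pCondExp μ π Y) ≤ sharp μ ρ Y :=
  stmt9_general μ 𝓧 h𝓛 ρ hdil
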